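/- arXiv:2012.13500 — 7 statements merged into one kernel-verified Lean document; each statement's English description precedes it below -/
import Mathlib

section
/- Let r ≥ 3 and n ≥ r be integers, let F be a field, and let f, g ∈ H_n^{(r-1)}(F) be colorings with Ψ_n^{(r-1,r)} f = Ψ_n^{(r-1,r)} g. If f ≠ g, then f and g differ on at least n − r + 2 hyperedges; that is, the number of (r−1)-element subsets e of the vertex set with f(e) ≠ g(e) is at least n − r + 2. -/
/-!
Fix an `(r-1)`-set `e₀` on which `f` and `g` differ. For every vertex `v ∉ e₀`, the sums of `f`
and `g` over the `(r-1)`-subsets of the `r`-set `insert v e₀` agree, so besides `e₀` some other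
`(r-1)`-subset `e` of `insert v e₀` carries a difference; such an `e` contains `v`, hence
`e \ e₀ = {v}` and distinct vertices give distinct sets. Together with `e₀` this yields
`(n - (r - 1)) + 1` sets on which `f` and `g` differ.
-/

namespace Finset

variable {α M : Type*} [DecidableEq α]

lemma eq_of_subset_insert_of_card_eq {e e₀ : Finset α} {v : α} (hsub : e ⊆ insert v e₀)
    (hv : v ∉ e) (hcard : e.card = e₀.card) : e = e₀ :=
  eq_of_subset_of_card_le ((subset_insert_iff_of_notMem hv).mp hsub) hcard.ge

lemma apply_eq_of_sum_eq_of_eqOn_erase [AddCancelCommMonoid M] {s : Finset α} {f g : α → M}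
    {a : α} (ha : a ∈ s) (hsum : ∑ x ∈ s, f x = ∑ x ∈ s, g x)
    (heq : ∀ x ∈ s.erase a, f x = g x) : f a = g a := by
  rw [← add_sum_erase s f ha, ← add_sum_erase s g ha, sum_congr rfl heq] at hsum
  exact add_right_cancel hsum

lemma exists_mem_powersetCard_insert_ne [AddCancelCommMonoid M] {f g : Finset α → M}
    {e₀ : Finset α} {v : α}
    (hsum : ∑ e ∈ (insert v e₀).powersetCard e₀.card, f e =
      ∑ e ∈ (insert v e₀).powersetCard e₀.card, g e)
    (hne : f e₀ ≠ g e₀) :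
    ∃ e ∈ (insert v e₀).powersetCard e₀.card, v ∈ e ∧ f e ≠ g e := by
  by_contra! hall
  refine hne (apply_eq_of_sum_eq_of_eqOn_erase ?_ hsum fun e he ↦ ?_)
  · exact mem_powersetCard.mpr ⟨subset_insert v e₀, rfl⟩
  · obtain ⟨he₀, he⟩ := mem_erase.mp he
    obtain ⟨hsub, hcard⟩ := mem_powersetCard.mp he
    by_contra hfg
    have hve : v ∈ e := by_contra fun hve ↦ he₀ (eq_of_subset_insert_of_card_eq hsub hve hcard)
    exact hfg (hall e he hve)

lemma card_compl_add_one_le_card_filter_ne [Fintype α] [AddCancelCommMonoid M] [DecidableEq M]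
    {f g : Finset α → M} {s : ℕ}
    (hlift : ∀ e : Finset α, e.card = s + 1 →
      ∑ e' ∈ e.powersetCard s, f e' = ∑ e' ∈ e.powersetCard s, g e')
    {e₀ : Finset α} (he₀ : e₀.card = s) (hne : f e₀ ≠ g e₀) :
    e₀ᶜ.card + 1 ≤ ((univ.powersetCard s).filter fun e ↦ f e ≠ g e).card := by
  set S := (univ.powersetCard s).filter fun e ↦ f e ≠ g e
  have he₀S : e₀ ∈ S := mem_filter.mpr ⟨mem_powersetCard.mpr ⟨subset_univ _, he₀⟩, hne⟩
  have hwitness : ∀ v ∉ e₀, ∃ e ∈ (insert v e₀).powersetCard s, v ∈ e ∧ f e ≠ g e := by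
    intro v hv
    subst he₀
    exact exists_mem_powersetCard_insert_ne (hlift _ (card_insert_of_notMem hv)) hne
  choose! t ht_mem ht_v ht_ne using hwitness
  have hmaps : Set.MapsTo t (e₀ᶜ : Finset α) (S.erase e₀) := by
    intro v hv
    have hv : v ∉ e₀ := mem_compl.mp hv
    refine mem_erase.mpr ⟨fun h ↦ hv (h ▸ ht_v v hv), mem_filter.mpr ⟨?_, ht_ne v hv⟩⟩
    exact mem_powersetCard.mpr ⟨subset_univ _, (mem_powersetCard.mp (ht_mem v hv)).2⟩
  have hinj : Set.InjOn t (e₀ᶜ : Finset α) := by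
    intro v hv w hw hvw
    have hv : v ∉ e₀ := mem_compl.mp hv
    have hw : w ∉ e₀ := mem_compl.mp hw
    have hwv : w ∈ insert v e₀ := (mem_powersetCard.mp (ht_mem v hv)).1 (hvw ▸ ht_v w hw)
    exact ((mem_insert.mp hwv).resolve_right hw).symm
  have hle := card_le_card_of_injOn t hmaps hinj
  rw [card_erase_of_mem he₀S] at hle
  have hpos : 0 < S.card := card_pos.mpr ⟨e₀, he₀S⟩
  omega

end Finset

/-- if two colorings of the `(r-1)`-element subsets have the same
image under the lifting map `Ψ_n^{(r-1,r)}` and differ somewhere, then they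
differ on at least `n - r + 2` hyperedges. -/
theorem lift_eq_differ_ge (F : Type*) [Field F] [DecidableEq F] (n r : ℕ)
    (hr : 3 ≤ r) (hrn : r ≤ n)
    (f g : Finset (Fin n) → F)
    (hlift : ∀ e : Finset (Fin n), e.card = r →
      ∑ e' ∈ e.powersetCard (r - 1), f e' = ∑ e' ∈ e.powersetCard (r - 1), g e')
    (hne : ∃ e : Finset (Fin n), e.card = r - 1 ∧ f e ≠ g e) :
    n - r + 2 ≤
      (((Finset.univ : Finset (Fin n)).powersetCard (r - 1)).filter
        (fun e => f e ≠ g e)).card := by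
  obtain ⟨e₀, he₀, hfg⟩ := hne
  have hlift' : ∀ e : Finset (Fin n), e.card = r - 1 + 1 →
      ∑ e' ∈ e.powersetCard (r - 1), f e' = ∑ e' ∈ e.powersetCard (r - 1), g e' :=
    fun e he ↦ hlift e (by omega)
  have hbound := Finset.card_compl_add_one_le_card_filter_ne hlift' he₀ hfg
  rw [Finset.card_compl, Fintype.card_fin, he₀] at hbound
  omega
end

section
/- Let r ≥ 3 be odd, let n ≥ r, let f ∈ H_n^{(r-1)}(F_2), and let g = Ψ_n^{(r-1,r)} f. Suppose W is a set of vertices with |W| ≥ r and c ∈ F_2 is such that g(e) = c for every r-element subset e of W. Define a simple graph on W by making distinct vertices a and b adjacent if and only if there exists an (r−1)-element subset e of W with a ∈ e, b ∈ e, and f(e) = c. Then this graph has at most r − 1 connected components (isolated vertices of W counting as components). -/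
/-!
If the graph had `r` components, pick one vertex from each to get an `r`-set `T ⊆ W`. The
`g`-colour `c` of `T` is the sum of the `f`-colours of its `r` faces of size `r - 1`; as `r` is odd,
some face has `f`-colour `c`, and since `r - 1 ≥ 2` it joins two of the chosen vertices, which
were supposed to lie in different components.
-/

theorem ZMod.exists_eq_of_sum_eq_of_odd_card {ι : Type*} {s : Finset ι} (hs : Odd s.card)
    {g : ι → ZMod 2} {c : ZMod 2} (hsum : ∑ i ∈ s, g i = c) : ∃ i ∈ s, g i = c := by
  by_contra! hne
  have hflip : ∀ x y : ZMod 2, x ≠ y → x = y + 1 := by decide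
  rw [Finset.sum_congr rfl fun i hi => hflip _ _ (hne i hi), Finset.sum_const, nsmul_eq_mul,
    ZMod.natCast_eq_one_iff_odd.mpr hs, one_mul] at hsum
  simp at hsum

namespace SimpleGraph

theorem card_connectedComponent_lt_of_forall_card_eq_exists_adj {V : Type*} [Finite V]
    (G : SimpleGraph V) {k : ℕ}
    (h : ∀ s : Finset V, s.card = k → ∃ a ∈ s, ∃ b ∈ s, G.Adj a b) :
    Nat.card G.ConnectedComponent < k := by
  by_contra! hk
  have : Fintype G.ConnectedComponent := Fintype.ofFinite _
  obtain ⟨t, -, ht⟩ := (Finset.univ : Finset G.ConnectedComponent).exists_subset_card_eq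
    (n := k) (by rwa [Finset.card_univ, ← Nat.card_eq_fintype_card])
  choose rep hrep using fun C : G.ConnectedComponent => C.exists_rep
  have hrep_inj : Function.Injective rep := Function.LeftInverse.injective hrep
  obtain ⟨_, ha, _, hb, hadj⟩ := h (t.map ⟨rep, hrep_inj⟩) (by rw [Finset.card_map, ht])
  obtain ⟨A, -, rfl⟩ := Finset.mem_map.mp ha
  obtain ⟨B, -, rfl⟩ := Finset.mem_map.mp hb
  have hAB : A = B := by
    rw [← hrep A, ← hrep B]
    exact ConnectedComponent.connectedComponentMk_eq_of_adj hadj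
  subst hAB
  exact hadj.ne rfl

end SimpleGraph

theorem components_le_general (n r : ℕ) (hr : 3 ≤ r) (hodd : Odd r)
    (f : Finset (Fin n) → ZMod 2) (c : ZMod 2)
    (W : Finset (Fin n))
    (hmono : ∀ e : Finset (Fin n), e ⊆ W → e.card = r →
      ∑ e' ∈ e.powersetCard (r - 1), f e' = c) :
    Nat.card
      (SimpleGraph.fromRel (fun a b : {x // x ∈ W} =>
        ∃ e : Finset (Fin n), e ⊆ W ∧ e.card = r - 1 ∧
          (a : Fin n) ∈ e ∧ (b : Fin n) ∈ e ∧ f e = c)).ConnectedComponent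
      ≤ r - 1 := by
  refine Nat.le_sub_one_of_lt
    (SimpleGraph.card_connectedComponent_lt_of_forall_card_eq_exists_adj _ fun s hs => ?_)
  set T := s.map (Function.Embedding.subtype (· ∈ W))
  have hTW : T ⊆ W := fun x hx => by
    obtain ⟨y, -, rfl⟩ := Finset.mem_map.mp hx
    exact y.2
  have hT : T.card = r := by rw [Finset.card_map, hs]
  have hfaces : Odd (T.powersetCard (r - 1)).card := by
    rwa [Finset.card_powersetCard, hT, Nat.choose_symm (by omega), Nat.choose_one_right]
  obtain ⟨e, he, hfe⟩ := ZMod.exists_eq_of_sum_eq_of_odd_card hfaces (hmono T hTW hT)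
  obtain ⟨heT, he_card⟩ := Finset.mem_powersetCard.mp he
  obtain ⟨_, ha, _, hb, hab⟩ := Finset.one_lt_card.mp (by omega : 1 < e.card)
  obtain ⟨a, has, rfl⟩ := Finset.mem_map.mp (heT ha)
  obtain ⟨b, hbs, rfl⟩ := Finset.mem_map.mp (heT hb)
  exact ⟨a, has, b, hbs, SimpleGraph.fromRel_adj _ _ _ |>.mpr
    ⟨fun h => hab (congrArg _ h), .inl ⟨e, heT.trans hTW, he_card, ha, hb, hfe⟩⟩⟩

/-- let `r ≥ 3` be odd, `g = Ψ_n^{(r-1,r)} f`, and suppose every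
`r`-element subset of `W` gets color `c` under `g` (where `|W| ≥ r`).  Then the
graph on `W` joining two distinct vertices when some `(r-1)`-element subset of
`W` containing both has `f`-color `c` has at most `r - 1` connected
components. -/
theorem components_le (n r : ℕ) (hr : 3 ≤ r) (hodd : Odd r) (hrn : r ≤ n)
    (f : Finset (Fin n) → ZMod 2) (c : ZMod 2)
    (W : Finset (Fin n)) (hW : r ≤ W.card)
    (hmono : ∀ e : Finset (Fin n), e ⊆ W → e.card = r →
      ∑ e' ∈ e.powersetCard (r - 1), f e' = c) :
    Nat.card
      (SimpleGraph.fromRel (fun a b : {x // x ∈ W} =>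
        ∃ e : Finset (Fin n), e ⊆ W ∧ e.card = r - 1 ∧
          (a : Fin n) ∈ e ∧ (b : Fin n) ∈ e ∧ f e = c)).ConnectedComponent
      ≤ r - 1 :=
  components_le_general n r hr hodd f c W hmono
end

section
/- Let r ≥ 3 be odd and let n ≥ r + 1. For every coloring f ∈ H_n^{(r-1)}(F_2), the lifted coloring g = Ψ_n^{(r-1,r)} f contains no induced copy of K_m^{(r)} − e in either color: there do not exist an integer m with r + 1 ≤ m ≤ n, an m-element set S of vertices, a color c ∈ F_2, and an r-element subset e₀ of S such that g(e) = c for every r-element subset e of S with e ≠ e₀ while g(e₀) = c + 1. -/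
/-!
Every `(r-1)`-subset of an `(r+1)`-set `T` lies in exactly two `r`-subsets of `T`, so over
`F_2` the lifted coloring sums to zero over the `r`-subsets of `T`. If `S` carried an induced
`K_m^{(r)} - e` in color `c` with missing edge `e₀`, choose `T` with `e₀ ⊆ T ⊆ S`: the same sum
would be `(r+1) • c + 1 = 1`, because `r + 1` is even.
-/

open Finset

theorem Finset.sum_powersetCard_succ_sum_powersetCard {α M : Type*} [DecidableEq α]
    [AddCommMonoid M] (T : Finset α) (k : ℕ) (f : Finset α → M) :
    ∑ e ∈ T.powersetCard (k + 1), ∑ e' ∈ e.powersetCard k, f e' =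
      (#T - k) • ∑ e' ∈ T.powersetCard k, f e' := by
  calc ∑ e ∈ T.powersetCard (k + 1), ∑ e' ∈ e.powersetCard k, f e'
      = ∑ e' ∈ T.powersetCard k, ∑ e ∈ T.powersetCard (k + 1) with e' ⊆ e, f e' := by
        refine sum_comm' fun e e' => ?_
        simp only [mem_powersetCard, mem_filter]
        constructor
        · rintro ⟨⟨heT, he⟩, he'e, he'⟩
          exact ⟨⟨⟨heT, he⟩, he'e⟩, he'e.trans heT, he'⟩
        · rintro ⟨⟨⟨heT, he⟩, he'e⟩, -, he'⟩
          exact ⟨⟨heT, he⟩, he'e, he'⟩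
    _ = ∑ e' ∈ T.powersetCard k, (#T - k) • f e' := by
        refine sum_congr rfl fun e' he' => ?_
        obtain ⟨he'T, he'⟩ := mem_powersetCard.1 he'
        rw [sum_const, card_filter_powersetCard_subset e' T (k + 1) he'T (by omega), he',
          Nat.add_sub_cancel_left, Nat.choose_one_right]
    _ = (#T - k) • ∑ e' ∈ T.powersetCard k, f e' := smul_sum.symm

theorem Finset.sum_add_eq_card_nsmul_add_of_eq_of_ne {ι M : Type*} [DecidableEq ι]
    [AddCommMonoid M] {s : Finset ι} {g : ι → M} {i₀ : ι} {c : M} (h₀ : i₀ ∈ s)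
    (hg : ∀ i ∈ s, i ≠ i₀ → g i = c) :
    ∑ i ∈ s, g i + c = #s • c + g i₀ := by
  have hs : #s = #(s.erase i₀) + 1 := (card_erase_add_one h₀).symm
  rw [← add_sum_erase s g h₀, sum_congr rfl fun i hi => hg i (mem_of_mem_erase hi)
    (ne_of_mem_erase hi), sum_const, hs, succ_nsmul]
  abel

theorem no_induced_clique_minus_edge_general (n r : ℕ) (hodd : Odd r)
    (f : Finset (Fin n) → ZMod 2) :
    ¬ ∃ (m : ℕ) (S : Finset (Fin n)) (c : ZMod 2) (e₀ : Finset (Fin n)),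
        r + 1 ≤ m ∧ m ≤ n ∧ S.card = m ∧ e₀ ⊆ S ∧ e₀.card = r ∧
        (∀ e : Finset (Fin n), e ⊆ S → e.card = r → e ≠ e₀ →
          ∑ e' ∈ e.powersetCard (r - 1), f e' = c) ∧
        ∑ e' ∈ e₀.powersetCard (r - 1), f e' = c + 1 := by
  rintro ⟨m, S, c, e₀, hm, -, rfl, he₀S, he₀, hother, he₀c⟩
  obtain ⟨j, rfl⟩ := hodd
  rw [Nat.add_sub_cancel] at hother he₀c
  obtain ⟨T, he₀T, hTS, hT⟩ := exists_subsuperset_card_eq he₀S (by omega) hm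
  have hzero : ∑ e ∈ T.powersetCard (2 * j + 1), ∑ e' ∈ e.powersetCard (2 * j), f e' = 0 := by
    rw [sum_powersetCard_succ_sum_powersetCard, hT, show 2 * j + 1 + 1 - 2 * j = 2 by omega,
      CharTwo.two_nsmul]
  have hsum := sum_add_eq_card_nsmul_add_of_eq_of_ne (mem_powersetCard.2 ⟨he₀T, he₀⟩)
    fun e he he_ne => hother e ((mem_powersetCard.1 he).1.trans hTS) (mem_powersetCard.1 he).2
      he_ne
  have heven : #(T.powersetCard (2 * j + 1)) • c = 0 := by
    rw [card_powersetCard, hT, Nat.choose_succ_self_right,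
      show 2 * j + 1 + 1 = 2 * (j + 1) by ring, mul_nsmul', CharTwo.two_nsmul]
  rw [hzero, heven, he₀c] at hsum
  simp at hsum

/-- for odd `r ≥ 3` and `n ≥ r + 1`, no lifted coloring
`Ψ_n^{(r-1,r)} f` contains an induced copy of `K_m^{(r)} - e` in either
color. -/
theorem no_induced_clique_minus_edge (n r : ℕ) (hr : 3 ≤ r) (hodd : Odd r)
    (hn : r + 1 ≤ n) (f : Finset (Fin n) → ZMod 2) :
    ¬ ∃ (m : ℕ) (S : Finset (Fin n)) (c : ZMod 2) (e₀ : Finset (Fin n)),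
        r + 1 ≤ m ∧ m ≤ n ∧ S.card = m ∧ e₀ ⊆ S ∧ e₀.card = r ∧
        (∀ e : Finset (Fin n), e ⊆ S → e.card = r → e ≠ e₀ →
          ∑ e' ∈ e.powersetCard (r - 1), f e' = c) ∧
        ∑ e' ∈ e₀.powersetCard (r - 1), f e' = c + 1 :=
  no_induced_clique_minus_edge_general n r hodd f
end

section
/- Let s, t ≥ 1 and let G be the disjoint union of the complete graphs K_s and K_t. If r is even with 4 ≤ r < s + t, then G is r-neutral: there exist a set of r vertices of G inducing a subgraph with an odd number of edges and a set of r vertices inducing a subgraph with an even number of edges. -/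
/-!
Choose `a + b + 1 = r` with `a < s` and `b < t`, and take `a + 1` vertices of `K_s` with `b` of
`K_t`, or `a` of `K_s` with `b + 1` of `K_t`. These induce `C(a+1,2) + C(b,2)` and
`C(a,2) + C(b+1,2)` edges, whose sum is `2 (C(a,2) + C(b,2)) + a + b`. As `a + b = r - 1` is odd,
exactly one of the two counts is odd.
-/

/-- The disjoint union `K_s ⊔ K_t`: two vertices of `Fin s ⊕ Fin t` are
adjacent exactly when they are distinct and lie in the same part. -/
def disjointUnionComplete (s t : ℕ) : SimpleGraph (Fin s ⊕ Fin t) :=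
  SimpleGraph.fromRel (fun a b => a.isLeft = b.isLeft)

namespace SimpleGraph

variable {V W : Type*}

theorem card_edgeSet_sum [Finite V] [Finite W] (G : SimpleGraph V) (H : SimpleGraph W) :
    Nat.card (G ⊕g H).edgeSet = Nat.card G.edgeSet + Nat.card H.edgeSet := by
  rw [Nat.card_congr edgeSetSumEquiv, Nat.card_sum]

theorem card_edgeSet_completeGraph [Fintype V] :
    Nat.card (completeGraph V).edgeSet = (Fintype.card V).choose 2 := by
  classical
  rw [Nat.card_eq_fintype_card, ← edgeFinset_card, card_edgeFinset_top_eq_card_choose_two]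

end SimpleGraph

open SimpleGraph

theorem disjointUnionComplete_eq_sum (s t : ℕ) :
    disjointUnionComplete s t = completeGraph (Fin s) ⊕g completeGraph (Fin t) := by
  ext (x | x) (y | y) <;> simp [disjointUnionComplete]

theorem exists_card_edgeSet_induce_disjointUnionComplete {s t a b : ℕ} (ha : a ≤ s)
    (hb : b ≤ t) :
    ∃ U : Finset (Fin s ⊕ Fin t), U.card = a + b ∧
      Nat.card ((disjointUnionComplete s t).induce (↑U : Set (Fin s ⊕ Fin t))).edgeSet =
        a.choose 2 + b.choose 2 := by
  let f : completeGraph (Fin a) ⊕g completeGraph (Fin b) ↪g disjointUnionComplete s t :=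
    disjointUnionComplete_eq_sum s t ▸
      (Embedding.completeGraph (Fin.castLEEmb ha)).sum (Embedding.completeGraph (Fin.castLEEmb hb))
  refine ⟨Finset.univ.map f.toEmbedding, by simp, ?_⟩
  have hrange : (↑(Finset.univ.map f.toEmbedding) : Set (Fin s ⊕ Fin t)) = Set.range f := by simp
  rw [hrange, ← Nat.card_congr f.isoInduceRange.mapEdgeSet, card_edgeSet_sum,
    card_edgeSet_completeGraph, card_edgeSet_completeGraph, Fintype.card_fin, Fintype.card_fin]

theorem Nat.odd_choose_two_add_choose_two_shift {a b : ℕ} (h : Odd (a + b)) :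
    Odd ((a + 1).choose 2 + b.choose 2 + (a.choose 2 + (b + 1).choose 2)) := by
  have hsum : (a + 1).choose 2 + b.choose 2 + (a.choose 2 + (b + 1).choose 2) =
      2 * (a.choose 2 + b.choose 2) + (a + b) := by
    simp only [Nat.choose_succ_succ', Nat.choose_one_right]
    ring
  rw [hsum]
  exact Even.add_odd (even_two_mul _) h

/-- for `s, t ≥ 1` and even `r` with `4 ≤ r < s + t`, the graph
`K_s ⊔ K_t` is `r`-neutral: some `r` vertices induce an odd number of edges
and some `r` vertices induce an even number of edges. -/
theorem disjointUnion_r_neutral (s t r : ℕ) (hs : 1 ≤ s) (ht : 1 ≤ t)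
    (hr4 : 4 ≤ r) (hreven : Even r) (hrst : r < s + t) :
    (∃ U : Finset (Fin s ⊕ Fin t), U.card = r ∧
      Odd (Nat.card ((disjointUnionComplete s t).induce
        (↑U : Set (Fin s ⊕ Fin t))).edgeSet)) ∧
    (∃ U : Finset (Fin s ⊕ Fin t), U.card = r ∧
      Even (Nat.card ((disjointUnionComplete s t).induce
        (↑U : Set (Fin s ⊕ Fin t))).edgeSet)) := by
  obtain ⟨a, b, has, hbt, hab⟩ : ∃ a b, a < s ∧ b < t ∧ a + b + 1 = r :=
    ⟨min (s - 1) (r - 1), r - 1 - min (s - 1) (r - 1), by omega, by omega, by omega⟩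
  have hodd : Odd (a + b) := Nat.not_even_iff_odd.mp (Nat.even_add_one.mp (hab ▸ hreven))
  obtain ⟨U, hU, hUe⟩ := exists_card_edgeSet_induce_disjointUnionComplete has hbt.le
  obtain ⟨U', hU', hU'e⟩ := exists_card_edgeSet_induce_disjointUnionComplete has.le hbt
  have hsum := Nat.odd_choose_two_add_choose_two_shift hodd
  rw [← hUe, ← hU'e] at hsum
  replace hU : U.card = r := by omega
  replace hU' : U'.card = r := by omega
  rcases Nat.even_or_odd (Nat.card ((disjointUnionComplete s t).induce (↑U : Set (Fin s ⊕ Fin t))).edgeSet)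
    with he | ho
  · exact ⟨⟨U', hU', (Nat.odd_add'.mp hsum).mpr he⟩, ⟨U, hU, he⟩⟩
  · exact ⟨⟨U, hU, ho⟩, ⟨U', hU', (Nat.odd_add.mp hsum).mp ho⟩⟩
end

section
/- Let s, t ≥ 1 and let G be the disjoint union of the complete graphs K_s and K_t. If r ≡ 3 (mod 4) with 3 ≤ r < s + t, then G is r-complete: every subgraph of G induced by a selection of r vertices has an odd number of edges. -/
/-!
If the `r` chosen vertices split as `a + b` between the two parts, they induce `K_a ⊔ K_b`, which
has `C(a,2) + C(b,2) = C(r,2) - ab` edges. As `r` is odd, one of `a, b` is even, so `ab` is even,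
while `C(r,2) = r (r - 1) / 2` is odd because `r ≡ 3 (mod 4)`.
-/

open Finset

theorem Nat.add_choose_two (a b : ℕ) : (a + b).choose 2 = a.choose 2 + a * b + b.choose 2 := by
  induction b with
  | zero => simp
  | succ b ih =>
    rw [← add_assoc, Nat.choose_succ_succ', ih, Nat.choose_succ_succ' b]
    simp only [Nat.choose_one_right]
    ring

theorem Nat.odd_choose_two_of_mod_four_eq_three {r : ℕ} (h : r % 4 = 3) : Odd (r.choose 2) := by
  obtain ⟨k, rfl⟩ : ∃ k, r = 4 * k + 3 := ⟨r / 4, by omega⟩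
  have : (4 * k + 3).choose 2 = (4 * k + 3) * (2 * k + 1) := by
    rw [Nat.choose_two_right, show 4 * k + 3 - 1 = 2 * (2 * k + 1) by omega, mul_left_comm,
      Nat.mul_div_cancel_left _ two_pos]
  rw [this]
  exact Nat.odd_mul.mpr ⟨⟨2 * k + 1, by ring⟩, ⟨k, rfl⟩⟩

theorem Nat.odd_choose_two_add_choose_two {a b : ℕ} (h : (a + b) % 4 = 3) :
    Odd (a.choose 2 + b.choose 2) := by
  have hab : Even (a * b) := Nat.even_mul.mpr (by simp only [Nat.even_iff]; omega)
  have hsum := Nat.odd_choose_two_of_mod_four_eq_three h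
  rw [Nat.add_choose_two, add_right_comm] at hsum
  exact (Nat.odd_add.mp hsum).mpr hab

namespace SimpleGraph

variable {V β : Type*} [Fintype V] [DecidableEq β] {G : SimpleGraph V} {f : V → β}

theorem degree_eq_card_fiber_sub_one [DecidableRel G.Adj]
    (hG : ∀ v w, G.Adj v w ↔ v ≠ w ∧ f v = f w) (v : V) :
    G.degree v = #{w | f w = f v} - 1 := by
  classical
  have : G.neighborFinset v = ({w | f w = f v} : Finset V).erase v := by
    ext w
    simp [hG, eq_comm]
  rw [← card_neighborFinset_eq_degree, this, card_erase_of_mem (by simp)]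

theorem natCard_edgeSet_eq_sum_choose_two [Fintype β]
    (hG : ∀ v w, G.Adj v w ↔ v ≠ w ∧ f v = f w) :
    Nat.card G.edgeSet = ∑ c, (#{v | f v = c}).choose 2 := by
  classical
  have h2 : 2 * Nat.card G.edgeSet = 2 * ∑ c, (#{v | f v = c}).choose 2 := by
    calc 2 * Nat.card G.edgeSet = ∑ v, G.degree v := by
          rw [sum_degrees_eq_twice_card_edges, Nat.card_eq_fintype_card, ← edgeFinset_card]
      _ = ∑ c, ∑ v with f v = c, (#{w | f w = c} - 1) := by
          rw [sum_fiberwise' univ f fun c => #{w | f w = c} - 1]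
          exact sum_congr rfl fun v _ => degree_eq_card_fiber_sub_one hG v
      _ = ∑ c, 2 * (#{v | f v = c}).choose 2 := by
          refine sum_congr rfl fun c _ => ?_
          rw [sum_const, smul_eq_mul, Nat.choose_two_right,
            Nat.mul_div_cancel' (Nat.even_mul_pred_self _).two_dvd]
      _ = 2 * ∑ c, (#{v | f v = c}).choose 2 := (mul_sum ..).symm
  omega

end SimpleGraph

theorem disjointUnionComplete_adj {s t : ℕ} {v w : Fin s ⊕ Fin t} :
    (disjointUnionComplete s t).Adj v w ↔ v ≠ w ∧ v.isLeft = w.isLeft := by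
  simp [disjointUnionComplete, eq_comm]

theorem disjointUnion_r_complete_general (s t r : ℕ) (hrmod : r % 4 = 3) :
    ∀ U : Finset (Fin s ⊕ Fin t), U.card = r →
      Odd (Nat.card ((disjointUnionComplete s t).induce
        (↑U : Set (Fin s ⊕ Fin t))).edgeSet) := by
  rintro U rfl
  have hadj (x y : (U : Set (Fin s ⊕ Fin t))) :
      ((disjointUnionComplete s t).induce _).Adj x y ↔
        x ≠ y ∧ (x : Fin s ⊕ Fin t).isLeft = (y : Fin s ⊕ Fin t).isLeft := by
    simp only [SimpleGraph.comap_adj, Function.Embedding.subtype_apply, disjointUnionComplete_adj,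
      ne_eq, Subtype.ext_iff]
  have hsplit :
      ∑ c : Bool, #{v : (U : Set (Fin s ⊕ Fin t)) | (v : Fin s ⊕ Fin t).isLeft = c} = #U := by
    rw [← card_eq_sum_card_fiberwise fun _ _ => mem_univ _, card_univ]
    simp
  rw [Fintype.sum_bool] at hsplit
  rw [SimpleGraph.natCard_edgeSet_eq_sum_choose_two hadj, Fintype.sum_bool]
  exact Nat.odd_choose_two_add_choose_two (by rwa [hsplit])

/-- for `s, t ≥ 1` and `r ≡ 3 (mod 4)` with `3 ≤ r < s + t`, the
graph `K_s ⊔ K_t` is `r`-complete: every `r` vertices induce an odd number of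
edges. -/
theorem disjointUnion_r_complete (s t r : ℕ) (hs : 1 ≤ s) (ht : 1 ≤ t)
    (hr : 3 ≤ r) (hrmod : r % 4 = 3) (hrst : r < s + t) :
    ∀ U : Finset (Fin s ⊕ Fin t), U.card = r →
      Odd (Nat.card ((disjointUnionComplete s t).induce
        (↑U : Set (Fin s ⊕ Fin t))).edgeSet) :=
  disjointUnion_r_complete_general s t r hrmod
end

section
/- For every integer n ≥ 3, the lifting map Ψ_n^{(2,3)} : H_n^{(2)}(F_2) → H_n^{(3)}(F_2) is exactly 2^{n−1}-to-one: for every coloring g in the image of Ψ_n^{(2,3)}, the number of colorings f ∈ H_n^{(2)}(F_2) with Ψ_n^{(2,3)} f = g equals 2^{n−1}. Equivalently, the kernel of the linear map Ψ_n^{(2,3)} has exactly 2^{n−1} elements. -/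
/-!
A coloring `f` of the pairs lies in the kernel of `Ψ^{(2,3)}` iff its values on the three
pairs of every triple sum to zero, i.e. `f {a, b} = f {z, a} + f {z, b}` for any fixed vertex
`z`. So the kernel consists exactly of the cut colorings `{a, b} ↦ h a + h b` of vertex labelings
`h`, and such a coloring determines `h` up to adding a constant; normalising `h z = 0` identifies
the kernel with the labelings of the other `n - 1` vertices. Every nonempty fibre of the additive
map `Ψ^{(2,3)}` is a coset of the kernel.
-/

/-- The lifting map `Ψ_n^{(2,3)}` from `F₂`-colorings of the 2-element subsets
of `Fin n` to `F₂`-colorings of the 3-element subsets. -/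
def lift23 (n : ℕ) (f : {e : Finset (Fin n) // e.card = 2} → ZMod 2) :
    {e : Finset (Fin n) // e.card = 3} → ZMod 2 :=
  fun e => ∑ e' ∈ ((e : Finset (Fin n)).powersetCard 2).attach,
    f ⟨e'.val, (Finset.mem_powersetCard.mp e'.property).2⟩

open Finset

theorem Finset.sum_powersetCard_two_triple {α M : Type*} [DecidableEq α] [AddCommMonoid M]
    (F : Finset α → M) {a b c : α} (hab : a ≠ b) (hac : a ≠ c) (hbc : b ≠ c) :
    ∑ s ∈ ({a, b, c} : Finset α).powersetCard 2, F s = F {a, b} + F {a, c} + F {b, c} := by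
  have ha : a ∉ ({b, c} : Finset α) := by simp [hab, hac]
  have hb : b ∉ ({a, c} : Finset α) := by simp [hab.symm, hbc]
  have hpair : powersetCard 2 {b, c} = {{b, c}} := by rw [← card_pair hbc, powersetCard_self]
  rw [powersetCard_succ_insert ha, hpair, powersetCard_one]
  simp only [map_insert, Function.Embedding.coeFn_mk, map_singleton, image_insert,
    image_singleton, union_insert, singleton_union]
  rw [sum_insert, sum_pair]
  · abel
  · exact (ne_of_mem_of_not_mem' (mem_insert_self a {c}) ha).symm
  · simp only [mem_insert, mem_singleton, not_or]
    exact ⟨ne_of_mem_of_not_mem' (mem_insert_self a {b}) ha,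
      ne_of_mem_of_not_mem' (mem_insert_of_mem (mem_singleton_self b)) hb⟩

abbrev HyperedgeColoring (n r : ℕ) : Type := {e : Finset (Fin n) // e.card = r} → ZMod 2

namespace HyperedgeColoring

variable {n r : ℕ}

def onFinset (f : HyperedgeColoring n r) (s : Finset (Fin n)) : ZMod 2 :=
  if h : s.card = r then f ⟨s, h⟩ else 0

lemma onFinset_of_card_eq (f : HyperedgeColoring n r) {s : Finset (Fin n)} (hs : s.card = r) :
    f.onFinset s = f ⟨s, hs⟩ :=
  dif_pos hs

lemma onFinset_pair (f : HyperedgeColoring n 2) {a b : Fin n} (hab : a ≠ b) :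
    f.onFinset {a, b} = f ⟨{a, b}, card_pair hab⟩ :=
  onFinset_of_card_eq f (card_pair hab)

lemma onFinset_singleton (f : HyperedgeColoring n 2) (a : Fin n) : f.onFinset {a} = 0 := by
  simp [onFinset]

def cut (h : Fin n → ZMod 2) : HyperedgeColoring n 2 :=
  fun e => ∑ x ∈ e.1, h x

lemma cut_pair (h : Fin n → ZMod 2) {a b : Fin n} (hab : a ≠ b)
    (he : ({a, b} : Finset (Fin n)).card = 2) : cut h ⟨{a, b}, he⟩ = h a + h b :=
  sum_pair hab

lemma onFinset_cut_pair (h : Fin n → ZMod 2) {a b : Fin n} (hab : a ≠ b) :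
    (cut h).onFinset {a, b} = h a + h b := by
  rw [onFinset_pair _ hab, cut_pair h hab]

end HyperedgeColoring

open HyperedgeColoring

def lift23Hom (n : ℕ) : HyperedgeColoring n 2 →+ HyperedgeColoring n 3 where
  toFun := lift23 n
  map_zero' := by ext; simp [lift23]
  map_add' f f' := by ext; simp [lift23, sum_add_distrib]

section

variable {n : ℕ}

lemma lift23_apply (f : HyperedgeColoring n 2) (e : {e : Finset (Fin n) // e.card = 3}) :
    lift23 n f e = ∑ s ∈ e.1.powersetCard 2, f.onFinset s := by
  rw [lift23, ← sum_attach _ f.onFinset]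
  exact sum_congr rfl fun s _ => (onFinset_of_card_eq f (mem_powersetCard.mp s.2).2).symm

lemma lift23_eq_zero_iff (f : HyperedgeColoring n 2) :
    lift23 n f = 0 ↔ ∀ a b c : Fin n, a ≠ b → a ≠ c → b ≠ c →
      f.onFinset {a, b} + f.onFinset {a, c} + f.onFinset {b, c} = 0 := by
  constructor
  · intro hf a b c hab hac hbc
    have h3 : ({a, b, c} : Finset (Fin n)).card = 3 :=
      card_eq_three.mpr ⟨a, b, c, hab, hac, hbc, rfl⟩
    rw [← sum_powersetCard_two_triple _ hab hac hbc, ← lift23_apply f ⟨_, h3⟩, hf, Pi.zero_apply]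
  · intro hf
    funext ⟨e, he⟩
    obtain ⟨a, b, c, hab, hac, hbc, rfl⟩ := card_eq_three.mp he
    rw [lift23_apply, sum_powersetCard_two_triple _ hab hac hbc, hf a b c hab hac hbc,
      Pi.zero_apply]

lemma lift23_cut (h : Fin n → ZMod 2) : lift23 n (cut h) = 0 := by
  refine (lift23_eq_zero_iff _).mpr fun a b c hab hac hbc => ?_
  rw [onFinset_cut_pair h hab, onFinset_cut_pair h hac, onFinset_cut_pair h hbc]
  linear_combination (h a + h b + h c) * CharTwo.two_eq_zero (R := ZMod 2)

lemma onFinset_pair_eq_of_lift23_eq_zero {f : HyperedgeColoring n 2} (hf : lift23 n f = 0)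
    (z : Fin n) {a b : Fin n} (hab : a ≠ b) :
    f.onFinset {a, b} = f.onFinset {z, a} + f.onFinset {z, b} := by
  by_cases hza : z = a
  · rw [hza, pair_eq_singleton, onFinset_singleton, zero_add]
  by_cases hzb : z = b
  · rw [hzb, pair_eq_singleton, onFinset_singleton, add_zero, pair_comm]
  rw [eq_comm, ← CharTwo.add_eq_zero]
  exact (lift23_eq_zero_iff f).mp hf z a b hza hzb hab

lemma cut_onFinset_of_lift23_eq_zero {f : HyperedgeColoring n 2} (hf : lift23 n f = 0)
    (z : Fin n) : cut (fun x => f.onFinset {z, x}) = f := by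
  funext ⟨e, he⟩
  obtain ⟨a, b, hab, rfl⟩ := card_eq_two.mp he
  rw [cut_pair _ hab, ← onFinset_pair_eq_of_lift23_eq_zero hf z hab, onFinset_pair f hab]

def lift23KerEquiv (m : ℕ) :
    {f : HyperedgeColoring (m + 1) 2 // lift23 (m + 1) f = 0} ≃ (Fin m → ZMod 2) where
  toFun f i := f.1.onFinset {0, i.succ}
  invFun h := ⟨cut (Fin.cons 0 h), lift23_cut _⟩
  left_inv := by
    rintro ⟨f, hf⟩
    refine Subtype.ext (Eq.trans (congrArg cut (funext fun x => ?_))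
      (cut_onFinset_of_lift23_eq_zero hf 0))
    cases x using Fin.cases <;> simp [onFinset_singleton]
  right_inv h := by
    funext i
    simp [onFinset_cut_pair _ (Fin.succ_ne_zero i).symm]

lemma card_lift23_ker (m : ℕ) :
    Nat.card {f : HyperedgeColoring (m + 1) 2 // lift23 (m + 1) f = 0} = 2 ^ m := by
  rw [Nat.card_congr (lift23KerEquiv m)]
  simp

lemma card_lift23_fiber (f₀ : HyperedgeColoring n 2) :
    Nat.card {f : HyperedgeColoring n 2 // lift23 n f = lift23 n f₀} =
      Nat.card {f : HyperedgeColoring n 2 // lift23 n f = 0} :=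
  Nat.card_congr ((lift23Hom n).fiberEquivKer f₀)

end

/-- for `n ≥ 3`, the lifting map `Ψ_n^{(2,3)}` is exactly
`2^(n-1)`-to-one: every coloring in its image has exactly `2^(n-1)` preimages;
equivalently, its kernel has exactly `2^(n-1)` elements. -/
theorem lift23_two_pow_to_one (n : ℕ) (hn : 3 ≤ n)
    (g : {e : Finset (Fin n) // e.card = 3} → ZMod 2)
    (hg : ∃ f, lift23 n f = g) :
    Nat.card {f : {e : Finset (Fin n) // e.card = 2} → ZMod 2 // lift23 n f = g}
        = 2 ^ (n - 1) ∧
    Nat.card {f : {e : Finset (Fin n) // e.card = 2} → ZMod 2 //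
        lift23 n f = fun _ => 0} = 2 ^ (n - 1) := by
  obtain ⟨f₀, rfl⟩ := hg
  obtain ⟨m, rfl⟩ : ∃ m, n = m + 1 := ⟨n - 1, by omega⟩
  have hker := card_lift23_ker m
  rw [Nat.add_sub_cancel]
  exact ⟨(card_lift23_fiber f₀).trans hker, hker⟩
end

section
/- Let s₁, s₂, s₃ ≥ 3 and let n ≥ 3. Suppose there exists a 3-coloring χ of the 2-element subsets of an n-element vertex set with colors {1, 2, 3} such that for each i ∈ {1, 2, 3} there is no s_i-element vertex set all of whose 2-element subsets receive color i. Then there exists a 3-coloring ψ of the 3-element subsets of the same vertex set with colors {1, 2, 3} such that: there is no (2s₁−1)-element vertex set all but at most one of whose 3-element subsets receive color 1 (i.e., no copy of K_{2s₁−1}^{(3)} − e in color 1); there is no (2s₂−1)-element vertex set all of whose 3-element subsets receive color 2; and there is no (2s₃−1)-element vertex set all of whose 3-element subsets receive color 3. Consequently, the Ramsey number satisfies R(K_{2s₁−1}^{(3)} − e, K_{2s₂−1}^{(3)}, K_{2s₃−1}^{(3)}; 3) ≥ R(K_{s₁}, K_{s₂}, K_{s₃}; 2). -/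
/-- The coloring `χ` of subsets of an `p`-element vertex set contains a
monochromatic complete `r`-uniform `K_m^{(r)}` in color `i`: an `m`-element
vertex set all of whose `r`-element subsets receive color `i`. -/
def HasMonoClique {C : Type} (p : ℕ) (χ : Finset (Fin p) → C) (r : ℕ)
    (i : C) (m : ℕ) : Prop :=
  ∃ S : Finset (Fin p), S.card = m ∧
    ∀ e : Finset (Fin p), e ⊆ S → e.card = r → χ e = i

/-- The coloring `ψ` of 3-element subsets contains a copy of `K_m^{(3)} - e` in
color `i`: an `m`-element vertex set all but at most one of whose 3-element
subsets receive color `i`. -/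
def HasCliqueMinusEdge {C : Type} [DecidableEq C] (p : ℕ)
    (ψ : Finset (Fin p) → C) (i : C) (m : ℕ) : Prop :=
  ∃ S : Finset (Fin p), S.card = m ∧
    ((S.powersetCard 3).filter (fun e => ψ e ≠ i)).card ≤ 1

/-- The graph Ramsey number `R(K_{s₁}, K_{s₂}, K_{s₃}; 2)`. -/
noncomputable def RGraph3 (s₁ s₂ s₃ : ℕ) : ℕ :=
  sInf {p | 0 < p ∧ ∀ χ : Finset (Fin p) → Fin 3,
    HasMonoClique p χ 2 0 s₁ ∨ HasMonoClique p χ 2 1 s₂ ∨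
      HasMonoClique p χ 2 2 s₃}

/-- The hypergraph Ramsey number
`R(K_{2s₁-1}^{(3)} - e, K_{2s₂-1}^{(3)}, K_{2s₃-1}^{(3)}; 3)`. -/
noncomputable def RHyp3 (s₁ s₂ s₃ : ℕ) : ℕ :=
  sInf {p | 0 < p ∧ ∀ ψ : Finset (Fin p) → Fin 3,
    HasCliqueMinusEdge p ψ 0 (2 * s₁ - 1) ∨
      HasMonoClique p ψ 3 1 (2 * s₂ - 1) ∨
        HasMonoClique p ψ 3 2 (2 * s₃ - 1)}

/-!
Order the vertices and give a triple the color of the pair left after removing its largest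
vertex. If a set `S` of `2s - 1` vertices had at most one triple off color `i`, let `u < w` be
its two largest vertices. For every pair `e` among the remaining `2s - 3 ≥ s` vertices the
triples `e ∪ {u}` and `e ∪ {w}` both carry the color of `e`, and they cannot both be off color
`i`; so these vertices span a `K_s` of color `i` in the pair coloring.

The inequality between the Ramsey numbers follows from the same lift once the hypergraph Ramsey
number is known to be finite, which is the finite Ramsey theorem for `3`-sets (induction on the
uniformity and on the sum of the target sizes).
-/

open Finset

def IsMonochromatic {α C : Type*} (χ : Finset α → C) (r : ℕ) (i : C) (S : Finset α) : Prop :=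
  ∀ e ⊆ S, #e = r → χ e = i

/-- The bound `p` may not depend on the vertex type `β`: it is used with `β = Fin (p + 1)`. -/
def HasRamseyBound {C : Type*} (r : ℕ) (m : C → ℕ) (p : ℕ) : Prop :=
  ∀ {β : Type} [DecidableEq β] (V : Finset β) (χ : Finset β → C), p ≤ #V →
    ∃ i, ∃ S ⊆ V, #S = m i ∧ IsMonochromatic χ r i S

section Ramsey

variable {α C : Type*} {χ : Finset α → C} {r : ℕ} {i : C} {S T : Finset α}

lemma IsMonochromatic.mono (hT : IsMonochromatic χ r i T) (hST : S ⊆ T) :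
    IsMonochromatic χ r i S :=
  fun e he => hT e (he.trans hST)

lemma isMonochromatic_empty (hr : r ≠ 0) (i : C) : IsMonochromatic χ r i ∅ := by
  intro e he hec
  rw [subset_empty.mp he, card_empty] at hec
  exact absurd hec.symm hr

lemma IsMonochromatic.insert [DecidableEq α] {v : α} (hS : IsMonochromatic χ (r + 1) i S)
    (hv : IsMonochromatic (fun e => χ (insert v e)) r i S) :
    IsMonochromatic χ (r + 1) i (insert v S) := by
  intro e he hec
  by_cases hve : v ∈ e
  · simpa only [insert_erase hve] using
      hv (e.erase v) (subset_insert_iff.mp he) (by rw [card_erase_of_mem hve, hec]; rfl)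
  · exact hS e ((subset_insert_iff_of_notMem hve).mp he) hec

lemma hasRamseyBound_zero [Fintype C] (m : C → ℕ) : HasRamseyBound 0 m (∑ i, m i) := by
  intro β _ V χ hV
  obtain ⟨S, hSV, hS⟩ := exists_subset_card_eq
    ((single_le_sum (fun i _ => Nat.zero_le (m i)) (mem_univ (χ ∅))).trans hV)
  exact ⟨χ ∅, S, hSV, hS, fun e _ he => by rw [card_eq_zero.mp he]⟩

/-- Pick a vertex `v`, find a large set `T` monochromatic for the link coloring
`e ↦ χ (insert v e)` of `r`-sets, and recurse inside `T` with the target of that color lowered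
by one: a monochromatic set of that color extends by `v`. -/
lemma exists_hasRamseyBound_succ [Fintype C] [DecidableEq C]
    (hr : ∀ m : C → ℕ, ∃ p, HasRamseyBound r m p) (m : C → ℕ) :
    ∃ p, HasRamseyBound (r + 1) m p := by
  induction hN : ∑ i, m i using Nat.strong_induction_on generalizing m with
  | _ N ih =>
  by_cases h0 : ∃ i, m i = 0
  · obtain ⟨i, hi⟩ := h0
    exact ⟨0, fun V _ _ => ⟨i, ∅, empty_subset V, by rw [card_empty, hi],
      isMonochromatic_empty r.succ_ne_zero i⟩⟩
  push Not at h0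
  have hP : ∀ i, ∃ p, HasRamseyBound (r + 1) (Function.update m i (m i - 1)) p := by
    refine fun i => ih _ (hN ▸ sum_lt_sum (fun j _ => ?_) ⟨i, mem_univ i, ?_⟩) _ rfl
    · rcases eq_or_ne j i with rfl | hji
      · simp
      · simp [Function.update_of_ne hji]
    · simpa using Nat.pos_of_ne_zero (h0 i)
  choose P hP using hP
  obtain ⟨g, hg⟩ := hr P
  refine ⟨g + 1, fun V χ hV => ?_⟩
  obtain ⟨v, hv⟩ : V.Nonempty := card_pos.mp (by omega)
  obtain ⟨i, T, hTV, hT, hTi⟩ :=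
    hg (V.erase v) (fun e => χ (insert v e)) (by rw [card_erase_of_mem hv]; omega)
  obtain ⟨j, S, hST, hS, hSj⟩ := hP i T χ hT.ge
  have hSV : S ⊆ V.erase v := hST.trans hTV
  by_cases hji : j = i
  · subst hji
    refine ⟨j, insert v S, insert_subset hv (hSV.trans (erase_subset v V)), ?_,
      hSj.insert (hTi.mono hST)⟩
    rw [card_insert_of_notMem fun h => notMem_erase v V (hSV h), hS, Function.update_self]
    have := h0 j
    omega
  · exact ⟨j, S, hSV.trans (erase_subset v V), by rw [hS, Function.update_of_ne hji], hSj⟩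

theorem exists_hasRamseyBound [Fintype C] [DecidableEq C] (r : ℕ) (m : C → ℕ) :
    ∃ p, HasRamseyBound r m p := by
  induction r generalizing m with
  | zero => exact ⟨_, hasRamseyBound_zero m⟩
  | succ r ih => exact exists_hasRamseyBound_succ ih m

end Ramsey

section Lift

variable {α C : Type*}

def liftColoring [LinearOrder α] (χ : Finset α → C) (e : Finset α) : C :=
  if h : e.Nonempty then χ (e.erase (e.max' h)) else χ ∅

lemma liftColoring_insert_of_forall_lt [LinearOrder α] (χ : Finset α → C) {t : α}
    {P : Finset α} (h : ∀ z ∈ P, z < t) : liftColoring χ (insert t P) = χ P := by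
  have hmax : (insert t P).max' (insert_nonempty t P) = t :=
    le_antisymm
      (max'_le _ _ _ fun z hz => (mem_insert.mp hz).elim le_of_eq fun hz => (h z hz).le)
      (le_max' _ _ (mem_insert_self t P))
  rw [liftColoring, dif_pos (insert_nonempty t P), hmax,
    erase_insert fun ht => lt_irrefl t (h t ht)]

lemma eq_of_card_filter_ne_le_one [DecidableEq C] {F : Finset α} {f : α → C} {i : C}
    (h : #{x ∈ F | f x ≠ i} ≤ 1) {a b : α} (ha : a ∈ F) (hb : b ∈ F) (hab : a ≠ b)
    (hfab : f a = f b) : f a = i := by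
  by_contra hai
  exact hab (card_le_one.mp h a (mem_filter.mpr ⟨ha, hai⟩) b
    (mem_filter.mpr ⟨hb, hfab ▸ hai⟩))

theorem exists_isMonochromatic_of_card_filter_liftColoring_ne_le_one [LinearOrder α]
    [DecidableEq C] {χ : Finset α → C} {i : C} {S : Finset α} (hS : 2 ≤ #S)
    (hbad : #{e ∈ S.powersetCard 3 | liftColoring χ e ≠ i} ≤ 1) :
    ∃ T ⊆ S, #S = #T + 2 ∧ IsMonochromatic χ 2 i T := by
  have hne : S.Nonempty := card_pos.mp (by omega)
  set w := S.max' hne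
  have hne' : (S.erase w).Nonempty :=
    card_pos.mp (by rw [card_erase_of_mem (max'_mem S hne)]; omega)
  set u := (S.erase w).max' hne'
  have huS : u ∈ S.erase w := max'_mem _ hne'
  have huw : u < w := lt_max'_of_mem_erase_max' S hne huS
  refine ⟨(S.erase w).erase u, (erase_subset _ _).trans (erase_subset _ _), ?_, ?_⟩
  · rw [card_erase_of_mem huS, card_erase_of_mem (max'_mem S hne)]
    omega
  intro e he hec
  have hlt : ∀ z ∈ e, z < u := fun z hz => lt_max'_of_mem_erase_max' _ hne' (he hz)
  have heS : e ⊆ S := (he.trans (erase_subset _ _)).trans (erase_subset _ _)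
  have htriple : ∀ t ∈ S, u ≤ t → insert t e ∈ S.powersetCard 3 := fun t ht hut =>
    mem_powersetCard.mpr ⟨insert_subset ht heS,
      by rw [card_insert_of_notMem fun h => (hlt t h).not_ge hut, hec]⟩
  have hcolor : ∀ t, u ≤ t → liftColoring χ (insert t e) = χ e := fun t hut =>
    liftColoring_insert_of_forall_lt χ fun z hz => (hlt z hz).trans_le hut
  rw [← hcolor u le_rfl]
  refine eq_of_card_filter_ne_le_one hbad (htriple u (mem_of_mem_erase huS) le_rfl)
    (htriple w (max'_mem S hne) huw.le) (fun h => ?_) (by rw [hcolor u le_rfl, hcolor w huw.le])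
  have hw : w ∈ insert u e := h ▸ mem_insert_self w e
  rcases mem_insert.mp hw with hwu | hwe
  · exact huw.ne hwu.symm
  · exact (hlt w hwe).not_gt huw

end Lift

section Cliques

variable {p : ℕ} {C : Type} [DecidableEq C]

lemma HasMonoClique.hasCliqueMinusEdge {ψ : Finset (Fin p) → C} {i : C} {m : ℕ}
    (h : HasMonoClique p ψ 3 i m) : HasCliqueMinusEdge p ψ i m := by
  obtain ⟨S, hS, hψ⟩ := h
  refine ⟨S, hS, (card_eq_zero.mpr (filter_eq_empty_iff.mpr fun e he => ?_)).trans_le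
    zero_le_one⟩
  exact not_not.mpr (hψ e (mem_powersetCard.mp he).1 (mem_powersetCard.mp he).2)

lemma not_hasCliqueMinusEdge_liftColoring {χ : Finset (Fin p) → C} {i : C} {s : ℕ}
    (hs : 3 ≤ s) (hχ : ¬ HasMonoClique p χ 2 i s) :
    ¬ HasCliqueMinusEdge p (liftColoring χ) i (2 * s - 1) := by
  rintro ⟨S, hS, hbad⟩
  obtain ⟨T, -, hST, hT⟩ :=
    exists_isMonochromatic_of_card_filter_liftColoring_ne_le_one (by omega) hbad
  obtain ⟨T', hT'T, hT'⟩ := exists_subset_card_eq (s := T) (n := s) (by omega)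
  exact hχ ⟨T', hT', hT.mono hT'T⟩

lemma liftColoring_avoids {s₁ s₂ s₃ : ℕ} (hs₁ : 3 ≤ s₁) (hs₂ : 3 ≤ s₂) (hs₃ : 3 ≤ s₃)
    {χ : Finset (Fin p) → Fin 3} (hχ₁ : ¬ HasMonoClique p χ 2 0 s₁)
    (hχ₂ : ¬ HasMonoClique p χ 2 1 s₂) (hχ₃ : ¬ HasMonoClique p χ 2 2 s₃) :
    ¬ HasCliqueMinusEdge p (liftColoring χ) 0 (2 * s₁ - 1) ∧
      ¬ HasMonoClique p (liftColoring χ) 3 1 (2 * s₂ - 1) ∧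
      ¬ HasMonoClique p (liftColoring χ) 3 2 (2 * s₃ - 1) :=
  ⟨not_hasCliqueMinusEdge_liftColoring hs₁ hχ₁,
    fun h => not_hasCliqueMinusEdge_liftColoring hs₂ hχ₂ h.hasCliqueMinusEdge,
    fun h => not_hasCliqueMinusEdge_liftColoring hs₃ hχ₃ h.hasCliqueMinusEdge⟩

end Cliques

theorem exists_rHyp3_witness (s₁ s₂ s₃ : ℕ) :
    ∃ p, 0 < p ∧ ∀ ψ : Finset (Fin p) → Fin 3,
      HasCliqueMinusEdge p ψ 0 (2 * s₁ - 1) ∨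
        HasMonoClique p ψ 3 1 (2 * s₂ - 1) ∨ HasMonoClique p ψ 3 2 (2 * s₃ - 1) := by
  obtain ⟨g, hg⟩ := exists_hasRamseyBound 3 ![2 * s₁ - 1, 2 * s₂ - 1, 2 * s₃ - 1]
  refine ⟨g + 1, g.succ_pos, fun ψ => ?_⟩
  obtain ⟨i, S, -, hS, hψ⟩ := hg univ ψ (by simp)
  fin_cases i
  · exact Or.inl (HasMonoClique.hasCliqueMinusEdge ⟨S, hS, hψ⟩)
  · exact Or.inr (Or.inl ⟨S, hS, hψ⟩)
  · exact Or.inr (Or.inr ⟨S, hS, hψ⟩)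

theorem rGraph3_le_rHyp3 {s₁ s₂ s₃ : ℕ} (hs₁ : 3 ≤ s₁) (hs₂ : 3 ≤ s₂) (hs₃ : 3 ≤ s₃) :
    RGraph3 s₁ s₂ s₃ ≤ RHyp3 s₁ s₂ s₃ := by
  obtain ⟨hpos, hψ⟩ := Nat.sInf_mem (exists_rHyp3_witness s₁ s₂ s₃)
  refine Nat.sInf_le ⟨hpos, fun χ => ?_⟩
  by_contra! hχ
  obtain ⟨h₁, h₂, h₃⟩ := liftColoring_avoids hs₁ hs₂ hs₃ hχ.1 hχ.2.1 hχ.2.2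
  rcases hψ (liftColoring χ) with h | h | h
  exacts [h₁ h, h₂ h, h₃ h]

theorem lift_three_coloring_general (s₁ s₂ s₃ n : ℕ)
    (hs₁ : 3 ≤ s₁) (hs₂ : 3 ≤ s₂) (hs₃ : 3 ≤ s₃)
    (χ : Finset (Fin n) → Fin 3)
    (hχ₁ : ¬ HasMonoClique n χ 2 0 s₁)
    (hχ₂ : ¬ HasMonoClique n χ 2 1 s₂)
    (hχ₃ : ¬ HasMonoClique n χ 2 2 s₃) :
    (∃ ψ : Finset (Fin n) → Fin 3,
      ¬ HasCliqueMinusEdge n ψ 0 (2 * s₁ - 1) ∧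
      ¬ HasMonoClique n ψ 3 1 (2 * s₂ - 1) ∧
      ¬ HasMonoClique n ψ 3 2 (2 * s₃ - 1)) ∧
    RGraph3 s₁ s₂ s₃ ≤ RHyp3 s₁ s₂ s₃ :=
  ⟨⟨liftColoring χ, liftColoring_avoids hs₁ hs₂ hs₃ hχ₁ hχ₂ hχ₃⟩, rGraph3_le_rHyp3 hs₁ hs₂ hs₃⟩

/-- a 3-coloring of the pairs of an `n`-element set with no
monochromatic `K_{s_i}` in color `i` lifts to a 3-coloring of the triples with
no `K_{2s₁-1}^{(3)} - e` in color 1 and no monochromatic `K_{2s_i-1}^{(3)}` in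
colors 2, 3; consequently
`R(K_{2s₁-1}^{(3)} - e, K_{2s₂-1}^{(3)}, K_{2s₃-1}^{(3)}; 3) ≥
R(K_{s₁}, K_{s₂}, K_{s₃}; 2)`. -/
theorem lift_three_coloring (s₁ s₂ s₃ n : ℕ)
    (hs₁ : 3 ≤ s₁) (hs₂ : 3 ≤ s₂) (hs₃ : 3 ≤ s₃) (hn : 3 ≤ n)
    (χ : Finset (Fin n) → Fin 3)
    (hχ₁ : ¬ HasMonoClique n χ 2 0 s₁)
    (hχ₂ : ¬ HasMonoClique n χ 2 1 s₂)
    (hχ₃ : ¬ HasMonoClique n χ 2 2 s₃) :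
    (∃ ψ : Finset (Fin n) → Fin 3,
      ¬ HasCliqueMinusEdge n ψ 0 (2 * s₁ - 1) ∧
      ¬ HasMonoClique n ψ 3 1 (2 * s₂ - 1) ∧
      ¬ HasMonoClique n ψ 3 2 (2 * s₃ - 1)) ∧
    RGraph3 s₁ s₂ s₃ ≤ RHyp3 s₁ s₂ s₃ :=
  lift_three_coloring_general s₁ s₂ s₃ n hs₁ hs₂ hs₃ χ hχ₁ hχ₂ hχ₃
end
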